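/- arXiv:2512.14624 — 2 statements merged into one kernel-verified Lean document; each statement's English description precedes it below -/
import Mathlib

section
/- If Y₁,…,Yₙ are i.i.d. Bernoulli(p) random variables with p ∈ (0,1) and Ȳ := n⁻¹∑ᵢYᵢ, then for every ε > 0, P(kl(Ȳ, p) ≥ ε) ≤ 2e^{−nε}. -/
open Real

/-- The Bernoulli Kullback–Leibler divergence `kl : [0,1] × [0,1] → [0,∞]`, with the
conventions `kl(0,q) = −log(1−q)`, `kl(1,q) = −log q`, and the value `∞` when a
logarithm of zero would occur. -/
noncomputable def bernKL (p q : ℝ) : EReal :=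
  if p = 0 then (if q = 1 then ⊤ else ((-Real.log (1 - q) : ℝ) : EReal))
  else if p = 1 then (if q = 0 then ⊤ else ((-Real.log q : ℝ) : EReal))
  else if q = 0 ∨ q = 1 then ⊤
  else ((p * Real.log (p / q) + (1 - p) * Real.log ((1 - p) / (1 - q)) : ℝ) : EReal)


open MeasureTheory in
/-- The Bernoulli(p) distribution, as a measure on `ℝ` putting mass `p` at `1`
and mass `1−p` at `0`. -/
noncomputable def bernoulliMeasure (p : ℝ) : Measure ℝ :=
  ENNReal.ofReal p • Measure.dirac 1 + ENNReal.ofReal (1 - p) • Measure.dirac 0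

/-!
On `[p, 1]`, the event `kl(Ȳ, p) ≥ ε` is contained in `{Ȳ ≥ a}` for the least `a ∈ [p, 1]` with
`kl(a, p) ≥ ε`, which exists because `kl(·, p)` is continuous. The Chernoff bound with the optimal
exponent `t = log (a (1 - p) / (p (1 - a)))` gives `P(Ȳ ≥ a) ≤ exp (-n kl(a, p))` for `a < 1`,
and the case `a = 1` follows by letting `a ↑ 1`. On `[0, p]` the event is the same event for the
sample `1 - Yᵢ`, which is i.i.d. Bernoulli(1 - p), because `kl(1 - t, 1 - p) = kl(t, p)`.
-/

open MeasureTheory ProbabilityTheory Set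

-- Since `log 0 = 0`, this formula also matches the conventions of `bernKL` at `t = 0` and `t = 1`.
noncomputable def bernKLReal (t q : ℝ) : ℝ :=
  t * log (t / q) + (1 - t) * log ((1 - t) / (1 - q))

lemma bernKL_eq_bernKLReal {q : ℝ} (hq : q ∈ Ioo 0 1) (t : ℝ) :
    bernKL t q = bernKLReal t q := by
  obtain ⟨hq0, hq1⟩ := hq
  unfold bernKL bernKLReal
  rcases eq_or_ne t 0 with rfl | ht0
  · simp [hq1.ne, div_eq_mul_inv, log_inv]
  rcases eq_or_ne t 1 with rfl | ht1
  · simp [hq0.ne', div_eq_mul_inv, log_inv]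
  simp [ht0, ht1, hq0.ne', hq1.ne]

lemma mul_log_div (x : ℝ) {y : ℝ} (hy : y ≠ 0) : x * log (x / y) = x * log x - x * log y := by
  rcases eq_or_ne x 0 with rfl | hx
  · simp
  rw [log_div hx hy, mul_sub]

lemma bernKLReal_eq_neg_binEntropy_sub {q : ℝ} (hq0 : q ≠ 0) (hq1 : q ≠ 1) (t : ℝ) :
    bernKLReal t q = -binEntropy t - t * log q - (1 - t) * log (1 - q) := by
  rw [bernKLReal, mul_log_div _ hq0, mul_log_div _ (sub_ne_zero.2 hq1.symm), binEntropy,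
    log_inv, log_inv]
  ring

lemma continuous_bernKLReal_left {q : ℝ} (hq0 : q ≠ 0) (hq1 : q ≠ 1) :
    Continuous (bernKLReal · q) := by
  simp_rw [bernKLReal_eq_neg_binEntropy_sub hq0 hq1]
  fun_prop

lemma bernKLReal_one_sub (t q : ℝ) : bernKLReal (1 - t) (1 - q) = bernKLReal t q := by
  simp only [bernKLReal, sub_sub_cancel]
  ring

lemma bernoulliMeasure_eq_bernoulliMeasure_one_zero {q : ℝ} (hq : q ∈ Icc 0 1) :
    _root_.bernoulliMeasure q = Ber(1, 0, ⟨q, hq⟩) := by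
  ext s hs
  simp [_root_.bernoulliMeasure, bernoulliMeasure_def, ENNReal.ofReal, Real.toNNReal_of_nonneg hq.1,
    Real.toNNReal_of_nonneg (sub_nonneg.2 hq.2)]
  rfl

lemma integral_bernoulliMeasure {q : ℝ} (hq : q ∈ Icc 0 1) (f : ℝ → ℝ) :
    ∫ x, f x ∂_root_.bernoulliMeasure q = q * f 1 + (1 - q) * f 0 := by
  simp [bernoulliMeasure_eq_bernoulliMeasure_one_zero hq,
    ProbabilityTheory.integral_bernoulliMeasure]

lemma map_one_sub_bernoulliMeasure (q : ℝ) :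
    (_root_.bernoulliMeasure q).map (1 - ·) = _root_.bernoulliMeasure (1 - q) := by
  have h : Measurable fun x : ℝ ↦ 1 - x := by fun_prop
  rw [_root_.bernoulliMeasure, _root_.bernoulliMeasure, Measure.map_add _ _ h, Measure.map_smul,
    Measure.map_smul, Measure.map_dirac' h, Measure.map_dirac' h, sub_sub_cancel, add_comm]
  norm_num

lemma ae_mem_Icc_bernoulliMeasure (q : ℝ) : ∀ᵐ x ∂_root_.bernoulliMeasure q, x ∈ Icc (0 : ℝ) 1 := by
  simp only [_root_.bernoulliMeasure, ae_add_measure_iff]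
  exact ⟨Measure.ae_smul_measure (by simp) _, Measure.ae_smul_measure (by simp) _⟩

section BernoulliSample

variable {Ω : Type*} [MeasurableSpace Ω] {μ : Measure Ω} {X : Ω → ℝ} {q : ℝ}

lemma ae_mem_Icc_of_map_eq_bernoulliMeasure (hX : Measurable X)
    (hdist : μ.map X = _root_.bernoulliMeasure q) : ∀ᵐ ω ∂μ, X ω ∈ Icc (0 : ℝ) 1 :=
  ae_of_ae_map hX.aemeasurable (hdist ▸ ae_mem_Icc_bernoulliMeasure q)

lemma mgf_eq_of_map_eq_bernoulliMeasure (hq : q ∈ Icc 0 1) (hX : Measurable X)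
    (hdist : μ.map X = _root_.bernoulliMeasure q) (t : ℝ) :
    mgf X μ t = q * exp t + (1 - q) := by
  rw [← mgf_id_map hX.aemeasurable, hdist, mgf, _root_.integral_bernoulliMeasure hq]
  simp

lemma exp_neg_bernKLReal {a q t : ℝ} (ha : a ∈ Ioo 0 1) (hq : q ∈ Ioo 0 1)
    (ht : exp t = a * (1 - q) / (q * (1 - a))) :
    exp (-bernKLReal a q) = exp (-(t * a)) * (q * exp t + (1 - q)) := by
  obtain ⟨ha0, ha1⟩ := ha
  obtain ⟨hq0, hq1⟩ := hq
  have h1a : 0 < 1 - a := by linarith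
  have h1q : 0 < 1 - q := by linarith
  have hmgf : q * exp t + (1 - q) = exp (-log ((1 - a) / (1 - q))) := by
    rw [ht, exp_neg, exp_log (by positivity)]
    field_simp
    ring
  have ht' : t = log (a / q) - log ((1 - a) / (1 - q)) := by
    rw [← log_div (by positivity) (by positivity), ← log_exp t, ht]
    congr 1
    field_simp
  rw [hmgf, ← exp_add, bernKLReal, ht']
  ring_nf

variable {n : ℕ} {Y : Fin n → Ω → ℝ}

lemma ae_mean_mem_Icc (hmeas : ∀ i, Measurable (Y i))
    (hdist : ∀ i, μ.map (Y i) = _root_.bernoulliMeasure q) :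
    ∀ᵐ ω ∂μ, (∑ i, Y i ω) / n ∈ Icc (0 : ℝ) 1 := by
  filter_upwards [ae_all_iff.2 fun i ↦ ae_mem_Icc_of_map_eq_bernoulliMeasure (hmeas i) (hdist i)]
    with ω hω
  refine ⟨div_nonneg (Finset.sum_nonneg fun i _ ↦ (hω i).1) n.cast_nonneg,
    div_le_one_of_le₀ ?_ n.cast_nonneg⟩
  simpa using Finset.sum_le_sum fun i (_ : i ∈ Finset.univ) ↦ (hω i).2

variable [IsProbabilityMeasure μ]

lemma measure_le_mean_le_exp_neg_bernKLReal_of_lt_one (hn : 0 < n) (hq : q ∈ Ioo 0 1)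
    (hmeas : ∀ i, Measurable (Y i)) (hindep : iIndepFun Y μ)
    (hdist : ∀ i, μ.map (Y i) = _root_.bernoulliMeasure q) {a : ℝ} (hqa : q ≤ a) (ha1 : a < 1) :
    μ {ω | a ≤ (∑ i, Y i ω) / n} ≤ ENNReal.ofReal (exp (-(n * bernKLReal a q))) := by
  obtain ⟨hq0, hq1⟩ := hq
  have ha0 : 0 < a := hq0.trans_le hqa
  have h1a : 0 < 1 - a := by linarith
  have h1q : 0 < 1 - q := by linarith
  set t := log (a * (1 - q) / (q * (1 - a)))
  have hexp : exp t = a * (1 - q) / (q * (1 - a)) := exp_log (by positivity)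
  have ht : 0 ≤ t := log_nonneg (by rw [le_div_iff₀ (by positivity)]; nlinarith)
  have hint : Integrable (fun ω ↦ exp (t * (∑ i, Y i) ω)) μ :=
    hindep.integrable_exp_mul_sum hmeas fun i _ ↦ integrable_exp_mul_of_mem_Icc
      (hmeas i).aemeasurable (ae_mem_Icc_of_map_eq_bernoulliMeasure (hmeas i) (hdist i))
  have hmgf : mgf (∑ i, Y i) μ t = (q * exp t + (1 - q)) ^ n := by
    simp [hindep.mgf_sum hmeas,
      mgf_eq_of_map_eq_bernoulliMeasure ⟨hq0.le, hq1.le⟩ (hmeas _) (hdist _)]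
  have hevent : {ω | a ≤ (∑ i, Y i ω) / n} = {ω | a * n ≤ (∑ i, Y i) ω} := by
    ext ω
    simp [le_div_iff₀ (Nat.cast_pos.2 hn : (0 : ℝ) < n)]
  calc μ {ω | a ≤ (∑ i, Y i ω) / n}
      = ENNReal.ofReal (μ.real {ω | a * n ≤ (∑ i, Y i) ω}) := by rw [hevent, ofReal_measureReal]
    _ ≤ ENNReal.ofReal (exp (-t * (a * n)) * mgf (∑ i, Y i) μ t) :=
      ENNReal.ofReal_le_ofReal (measure_ge_le_exp_mul_mgf _ ht hint)
    _ = ENNReal.ofReal (exp (-(n * bernKLReal a q))) := by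
      rw [hmgf, show -(n * bernKLReal a q) = n * -bernKLReal a q by ring, exp_nat_mul,
        exp_neg_bernKLReal ⟨ha0, ha1⟩ ⟨hq0, hq1⟩ hexp, mul_pow, ← exp_nat_mul]
      congr 3
      ring

lemma measure_le_mean_le_exp_neg_bernKLReal (hn : 0 < n) (hq : q ∈ Ioo 0 1)
    (hmeas : ∀ i, Measurable (Y i)) (hindep : iIndepFun Y μ)
    (hdist : ∀ i, μ.map (Y i) = _root_.bernoulliMeasure q) {a : ℝ} (hqa : q ≤ a) (ha1 : a ≤ 1) :
    μ {ω | a ≤ (∑ i, Y i ω) / n} ≤ ENNReal.ofReal (exp (-(n * bernKLReal a q))) := by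
  rcases ha1.lt_or_eq with ha1 | rfl
  · exact measure_le_mean_le_exp_neg_bernKLReal_of_lt_one hn hq hmeas hindep hdist hqa ha1
  have hcont : Continuous fun b ↦ ENNReal.ofReal (exp (-(n * bernKLReal b q))) :=
    ENNReal.continuous_ofReal.comp <| continuous_exp.comp <|
      (continuous_const.mul (continuous_bernKLReal_left hq.1.ne' hq.2.ne)).neg
  refine ge_of_tendsto (hcont.continuousAt.tendsto.mono_left (nhdsWithin_le_nhds (s := Iio 1))) ?_
  filter_upwards [Ioo_mem_nhdsLT hq.2] with b hb
  exact (measure_mono fun ω hω ↦ hb.2.le.trans hω).trans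
    (measure_le_mean_le_exp_neg_bernKLReal_of_lt_one hn hq hmeas hindep hdist hb.1.le hb.2)

lemma measure_upper_bernKLReal_mean_ge_le (hn : 0 < n) (hq : q ∈ Ioo 0 1)
    (hmeas : ∀ i, Measurable (Y i)) (hindep : iIndepFun Y μ)
    (hdist : ∀ i, μ.map (Y i) = _root_.bernoulliMeasure q) (ε : ℝ) :
    μ {ω | (∑ i, Y i ω) / n ∈ Icc q 1 ∧ ε ≤ bernKLReal ((∑ i, Y i ω) / n) q} ≤
      ENNReal.ofReal (exp (-(n * ε))) := by
  set A := Icc q 1 ∩ {t | ε ≤ bernKLReal t q}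
  change μ ((fun ω ↦ (∑ i, Y i ω) / n) ⁻¹' A) ≤ _
  rcases A.eq_empty_or_nonempty with hA | hA
  · simp [hA]
  have hclosed : IsClosed A :=
    isClosed_Icc.inter (isClosed_le continuous_const (continuous_bernKLReal_left hq.1.ne' hq.2.ne))
  have hbdd : BddBelow A := ⟨q, fun t ht ↦ ht.1.1⟩
  obtain ⟨⟨hqa, ha1⟩, hεa⟩ := hclosed.csInf_mem hA hbdd
  calc μ ((fun ω ↦ (∑ i, Y i ω) / n) ⁻¹' A) ≤ μ {ω | sInf A ≤ (∑ i, Y i ω) / n} :=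
        measure_mono fun ω hω ↦ csInf_le hbdd hω
    _ ≤ ENNReal.ofReal (exp (-(n * bernKLReal (sInf A) q))) :=
        measure_le_mean_le_exp_neg_bernKLReal hn hq hmeas hindep hdist hqa ha1
    _ ≤ ENNReal.ofReal (exp (-(n * ε))) := by gcongr; exact hεa

lemma measure_lower_bernKLReal_mean_ge_le (hn : 0 < n) (hq : q ∈ Ioo 0 1)
    (hmeas : ∀ i, Measurable (Y i)) (hindep : iIndepFun Y μ)
    (hdist : ∀ i, μ.map (Y i) = _root_.bernoulliMeasure q) (ε : ℝ) :
    μ {ω | (∑ i, Y i ω) / n ∈ Icc 0 q ∧ ε ≤ bernKLReal ((∑ i, Y i ω) / n) q} ≤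
      ENNReal.ofReal (exp (-(n * ε))) := by
  have hmean : ∀ ω, (∑ i, (1 - Y i ω)) / n = 1 - (∑ i, Y i ω) / n := fun ω ↦ by
    rw [Finset.sum_sub_distrib]
    field_simp
    simp
  have hdist' : ∀ i, μ.map (fun ω ↦ 1 - Y i ω) = _root_.bernoulliMeasure (1 - q) := fun i ↦ by
    change μ.map ((1 - ·) ∘ Y i) = _
    rw [← Measure.map_map (by fun_prop) (hmeas i), hdist i, map_one_sub_bernoulliMeasure]
  refine (measure_mono ?_).trans <| measure_upper_bernKLReal_mean_ge_le (Y := fun i ω ↦ 1 - Y i ω)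
    hn ⟨sub_pos.2 hq.2, sub_lt_self 1 hq.1⟩ (fun i ↦ measurable_const.sub (hmeas i))
    (hindep.comp _ fun _ ↦ measurable_const.sub measurable_id) hdist' ε
  rintro ω ⟨⟨h0, hq'⟩, hε⟩
  simp only [mem_ofPred_eq, hmean, bernKLReal_one_sub]
  exact ⟨⟨by linarith, by linarith⟩, hε⟩

end BernoulliSample

open MeasureTheory ProbabilityTheory in
theorem bernKL_concentration_general {Ω : Type*} [MeasurableSpace Ω] (μ : Measure Ω)
    [IsProbabilityMeasure μ] (n : ℕ) (hn : 0 < n) (p : ℝ) (hp : p ∈ Set.Ioo (0:ℝ) 1)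
    (Y : Fin n → Ω → ℝ) (hmeas : ∀ i, Measurable (Y i))
    (hindep : iIndepFun Y μ)
    (hdist : ∀ i, μ.map (Y i) = _root_.bernoulliMeasure p)
    (ε : ℝ) :
    μ {ω | ((ε : ℝ) : EReal) ≤ bernKL ((∑ i, Y i ω) / n) p} ≤
      ENNReal.ofReal (2 * Real.exp (-(n * ε))) := by
  calc μ {ω | ((ε : ℝ) : EReal) ≤ bernKL ((∑ i, Y i ω) / n) p}
      ≤ μ ({ω | (∑ i, Y i ω) / n ∈ Icc p 1 ∧ ε ≤ bernKLReal ((∑ i, Y i ω) / n) p} ∪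
          {ω | (∑ i, Y i ω) / n ∈ Icc 0 p ∧ ε ≤ bernKLReal ((∑ i, Y i ω) / n) p}) := by
        refine measure_mono_ae ?_
        filter_upwards [ae_mean_mem_Icc hmeas hdist] with ω ⟨h0, h1⟩ (hε : (ε : EReal) ≤ _)
        rw [bernKL_eq_bernKLReal hp, EReal.coe_le_coe_iff] at hε
        rcases le_total p ((∑ i, Y i ω) / n) with h | h
        exacts [Or.inl ⟨⟨h, h1⟩, hε⟩, Or.inr ⟨⟨h0, h⟩, hε⟩]
    _ ≤ ENNReal.ofReal (exp (-(n * ε))) + ENNReal.ofReal (exp (-(n * ε))) :=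
        (measure_union_le _ _).trans <| add_le_add
          (measure_upper_bernKLReal_mean_ge_le hn hp hmeas hindep hdist ε)
          (measure_lower_bernKLReal_mean_ge_le hn hp hmeas hindep hdist ε)
    _ = ENNReal.ofReal (2 * exp (-(n * ε))) := by
        rw [← ENNReal.ofReal_add (by positivity) (by positivity), two_mul]

open MeasureTheory ProbabilityTheory in
/-- If `Y₁,…,Yₙ` are i.i.d. `Bernoulli(p)` with `p ∈ (0,1)` and `Ȳ := n⁻¹ ∑ᵢ Yᵢ`, then for
every `ε > 0`, `P(kl(Ȳ, p) ≥ ε) ≤ 2 exp(−nε)`. -/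
theorem bernKL_concentration {Ω : Type*} [MeasurableSpace Ω] (μ : Measure Ω)
    [IsProbabilityMeasure μ] (n : ℕ) (hn : 0 < n) (p : ℝ) (hp : p ∈ Set.Ioo (0:ℝ) 1)
    (Y : Fin n → Ω → ℝ) (hmeas : ∀ i, Measurable (Y i))
    (hindep : iIndepFun Y μ)
    (hdist : ∀ i, μ.map (Y i) = _root_.bernoulliMeasure p)
    (ε : ℝ) (hε : 0 < ε) :
    μ {ω | ((ε : ℝ) : EReal) ≤ bernKL ((∑ i, Y i ω) / n) p} ≤
      ENNReal.ofReal (2 * Real.exp (-(n * ε))) :=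
  bernKL_concentration_general μ n hn p hp Y hmeas hindep hdist ε
end

section
/- Let f₀ be a continuous log-concave density on ℝ with density quantile function J₀ and its a.e. derivative J₀' = ψ₀ ∘ F₀⁻¹ (decreasing). With u_ℓ := 2^{ℓ−1} for ℓ ≤ 0 and u_ℓ := 1 − 2^{−(ℓ+1)} for ℓ ≥ 1, the Fisher information i(f₀) := ∫ ψ₀² f₀ satisfies i(f₀) ≥ (1/8)·∑_{ℓ∈ℤ} 2^{−|ℓ|}·J₀'(u_ℓ)². -/
/-!
Put `X ℓ = F₀⁻¹(u_ℓ)` and cut the support of `f₀` into the cells `(X (ℓ-1), X ℓ]`. The two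
cells adjacent to `X ℓ` have `f₀`-mass at least `2^{-|ℓ|}/4`, and the mass `u_ℓ - u_{ℓ-1}` of
`(X (ℓ-1), X ℓ]` is at most `min 2^{-|ℓ|} 2^{-|ℓ-1|}`.
Log-concavity makes the score `ψ₀` decreasing on the support, so on each cell it lies between
its values at the two endpoints. If `ψ₀ (X ℓ) ≥ 0`, then `ψ₀² ≥ ψ₀ (X ℓ)²` on the cell to the
left of `X ℓ`; otherwise this holds on the cell to its right. Either way one cell contributes
at least `2^{-|ℓ|} ψ₀ (X ℓ)² / 4` to `∫ ψ₀² f₀`, and each cell is charged at most twice.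
The same sandwich bounds every cell from above, so `∫ ψ₀² f₀` is finite whenever the dyadic
series converges.
-/

open MeasureTheory Real

noncomputable def uGrid (j : ℤ) : ℝ := if j ≤ 0 then (2:ℝ) ^ (j - 1) else 1 - (2:ℝ) ^ (-(j + 1))

open Set Filter Topology
open scoped ENNReal NNReal

def IsLogConcave (f : ℝ → ℝ) : Prop :=
  ∀ x y : ℝ, ∀ t ∈ Icc (0:ℝ) 1, f x ^ t * f y ^ (1 - t) ≤ f (t * x + (1 - t) * y)

section LogConcave

variable {f ψ : ℝ → ℝ}

theorem IsLogConcave.rpow_mul_rpow_le (hf : IsLogConcave f) {x y a b : ℝ} (ha : 0 ≤ a)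
    (hb : 0 ≤ b) (hab : a + b = 1) : f x ^ a * f y ^ b ≤ f (a • x + b • y) := by
  obtain rfl : b = 1 - a := by linarith
  simpa only [smul_eq_mul] using hf x y a ⟨ha, by linarith⟩

theorem IsLogConcave.convex_pos (hf : IsLogConcave f) : Convex ℝ {x | 0 < f x} :=
  fun _ hx _ hy a b ha hb hab =>
    (mul_pos (rpow_pos_of_pos hx a) (rpow_pos_of_pos hy b)).trans_le
      (hf.rpow_mul_rpow_le ha hb hab)

theorem IsLogConcave.concaveOn_log (hf : IsLogConcave f) :
    ConcaveOn ℝ {x | 0 < f x} fun x => log (f x) := by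
  refine ⟨hf.convex_pos, fun x hx y hy a b ha hb hab => ?_⟩
  have hxa := rpow_pos_of_pos hx a
  have hyb := rpow_pos_of_pos hy b
  have := log_le_log (mul_pos hxa hyb) (hf.rpow_mul_rpow_le ha hb hab)
  rwa [log_mul hxa.ne' hyb.ne', log_rpow hx, log_rpow hy] at this

theorem ConcaveOn.antitoneOn_of_hasDerivWithinAt_Ioi {S : Set ℝ} {g g' : ℝ → ℝ}
    (hg : ConcaveOn ℝ S g) (hg' : ∀ x ∈ interior S, HasDerivWithinAt g (g' x) (Ioi x) x) :
    AntitoneOn g' (interior S) := by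
  have hright : ∀ x ∈ interior S, derivWithin g (Ioi x) x = g' x := fun x hx =>
    (hg' x hx).derivWithin (uniqueDiffWithinAt_Ioi x)
  intro x hx y hy hxy
  have := hg.neg.monotoneOn_rightDeriv hx hy hxy
  simp only [derivWithin.neg, hright x hx, hright y hy] at this
  linarith

theorem IsLogConcave.antitoneOn_score (hf : IsLogConcave f) (hcont : Continuous f)
    (hψ : ∀ x, 0 < f x → HasDerivWithinAt (fun t => log (f t)) (ψ x) (Ici x) x) :
    AntitoneOn ψ {x | 0 < f x} := by
  have hS : IsOpen {x | 0 < f x} := isOpen_lt continuous_const hcont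
  simpa only [hS.interior_eq] using hf.concaveOn_log.antitoneOn_of_hasDerivWithinAt_Ioi
    fun x hx => (hψ x (interior_subset hx : x ∈ {x | 0 < f x})).mono Ioi_subset_Ici_self

end LogConcave

section DistributionFunction

variable {f : ℝ → ℝ}

theorem monotone_integral_Iic (hf : Integrable f) (hf0 : ∀ x, 0 ≤ f x) :
    Monotone fun x => ∫ t in Iic x, f t := fun _ _ hab =>
  setIntegral_mono_set hf.integrableOn (ae_of_all _ hf0) (Iic_subset_Iic.2 hab).eventuallyLE

theorem integral_Ioc_eq_integral_Iic_sub (hf : Integrable f) {a b : ℝ} (hab : a ≤ b) :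
    ∫ t in Ioc a b, f t = (∫ t in Iic b, f t) - ∫ t in Iic a, f t := by
  rw [intervalIntegral.integral_Iic_sub_Iic hf.integrableOn hf.integrableOn,
    intervalIntegral.integral_of_le hab]

theorem exists_le_pos_of_integral_Iic_pos {x : ℝ} (h : 0 < ∫ t in Iic x, f t) :
    ∃ a ≤ x, 0 < f a := by
  by_contra! hneg
  exact h.not_ge (setIntegral_nonpos measurableSet_Iic hneg)

theorem exists_gt_pos_of_integral_Iic_lt (hf : Integrable f) {x : ℝ}
    (h : ∫ t in Iic x, f t < ∫ t, f t) : ∃ b > x, 0 < f b := by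
  by_contra! hneg
  have := setIntegral_nonpos (μ := volume) measurableSet_Ioi hneg
  linarith [intervalIntegral.integral_Iic_add_Ioi (b := x) hf.integrableOn hf.integrableOn]

theorem setIntegral_pos_of_continuous {s : Set ℝ} {x : ℝ} (hcont : Continuous f)
    (hf0 : ∀ x, 0 ≤ f x) (hfi : IntegrableOn f s) (hx : 0 < f x)
    [(𝓝[interior s] x).NeBot] : 0 < ∫ t in s, f t := by
  rw [setIntegral_pos_iff_support_of_nonneg_ae (ae_of_all _ hf0) hfi]
  have hopen : IsOpen (Function.support f ∩ interior s) :=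
    hcont.isOpen_support.inter isOpen_interior
  have hne : (Function.support f ∩ interior s).Nonempty := nonempty_of_mem <|
    inter_mem (mem_nhdsWithin_of_mem_nhds (hcont.isOpen_support.mem_nhds hx.ne'))
      self_mem_nhdsWithin
  exact (hopen.measure_pos volume hne).trans_le
    (measure_mono (inter_subset_inter_right _ interior_subset))

theorem integral_Iic_mem_Ioo_of_pos (hcont : Continuous f) (hf0 : ∀ x, 0 ≤ f x)
    (hfi : Integrable f) (hmass : ∫ t, f t = 1) {x : ℝ} (hx : 0 < f x) :
    ∫ t in Iic x, f t ∈ Ioo 0 1 := by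
  have : (𝓝[interior (Iic x)] x).NeBot := by rw [interior_Iic]; infer_instance
  have : (𝓝[interior (Ioi x)] x).NeBot := by rw [interior_Ioi]; infer_instance
  have hleft := setIntegral_pos_of_continuous (s := Iic x) hcont hf0 hfi.integrableOn hx
  have hright := setIntegral_pos_of_continuous (s := Ioi x) hcont hf0 hfi.integrableOn hx
  have hsplit := intervalIntegral.integral_Iic_add_Ioi (b := x) hfi.integrableOn hfi.integrableOn
  constructor <;> linarith

theorem IsLogConcave.pos_of_integral_Iic_mem_Ioo (hf : IsLogConcave f) (hfi : Integrable f)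
    (hmass : ∫ t, f t = 1) {x : ℝ} (hx : ∫ t in Iic x, f t ∈ Ioo 0 1) : 0 < f x := by
  obtain ⟨a, hax, ha⟩ := exists_le_pos_of_integral_Iic_pos hx.1
  obtain ⟨b, hxb, hb⟩ := exists_gt_pos_of_integral_Iic_lt hfi (hmass ▸ hx.2)
  exact hf.convex_pos.ordConnected.out ha hb ⟨hax, hxb.le⟩

end DistributionFunction

theorem uGrid_sub_uGrid_sub_one (j : ℤ) :
    uGrid j - uGrid (j - 1) = 2 ^ (-max |j| |j - 1| - 1) := by
  have h2 : ∀ k : ℤ, (2:ℝ) ^ (k + 1) = 2 * 2 ^ k := fun k => by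
    rw [zpow_add_one₀ two_ne_zero, mul_comm]
  unfold uGrid
  rcases le_or_gt j 0 with hj | hj
  · rw [if_pos hj, if_pos (by omega), abs_of_nonpos hj, abs_of_nonpos (by omega),
      max_eq_right (by omega), show j - 1 = j - 1 - 1 + 1 by ring, h2]
    ring_nf
  · rcases eq_or_lt_of_le (Int.add_one_le_iff.2 hj) with rfl | hj1
    · norm_num
    · rw [if_neg (by omega), if_neg (by omega), abs_of_pos hj, abs_of_pos (by omega),
        max_eq_left (by omega), show -(j - 1 + 1) = -j - 1 + 1 by ring, h2]
      ring_nf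

theorem uGrid_strictMono : StrictMono uGrid :=
  strictMono_int_of_lt_succ fun j => by
    have := uGrid_sub_uGrid_sub_one (j + 1)
    rw [add_sub_cancel_right] at this
    linarith [zpow_pos (two_pos : (0:ℝ) < 2) (-max |j + 1| |j| - 1)]

theorem uGrid_mem_Ioo (j : ℤ) : uGrid j ∈ Ioo 0 1 := by
  unfold uGrid
  split_ifs with hj
  · exact ⟨zpow_pos two_pos _, zpow_lt_one_of_neg₀ one_lt_two (by omega)⟩
  · exact ⟨sub_pos.2 (zpow_lt_one_of_neg₀ one_lt_two (by omega)),
      sub_lt_self _ (zpow_pos two_pos _)⟩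

theorem exists_uGrid_lt {t : ℝ} (ht : 0 < t) : ∃ j, uGrid j < t := by
  obtain ⟨n, hn⟩ := exists_pow_lt_of_lt_one ht (one_half_lt_one (α := ℝ))
  refine ⟨-n, lt_of_le_of_lt ?_ hn⟩
  rw [uGrid, if_pos (by omega), one_div, inv_pow, ← zpow_natCast, ← zpow_neg]
  exact zpow_le_zpow_right₀ one_le_two (by omega)

theorem exists_lt_uGrid {t : ℝ} (ht : t < 1) : ∃ j, t < uGrid j := by
  obtain ⟨n, hn⟩ := exists_pow_lt_of_lt_one (sub_pos.2 ht) (one_half_lt_one (α := ℝ))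
  have : (2:ℝ) ^ (-((n:ℤ) + 1 + 1)) ≤ (1 / 2) ^ n := by
    rw [one_div, inv_pow, ← zpow_natCast, ← zpow_neg]
    exact zpow_le_zpow_right₀ one_le_two (by omega)
  refine ⟨n + 1, ?_⟩
  rw [uGrid, if_neg (by omega)]
  linarith

theorem uGrid_sub_uGrid_sub_one_le (j : ℤ) : uGrid j - uGrid (j - 1) ≤ 2 ^ (-|j|) := by
  rw [uGrid_sub_uGrid_sub_one]
  exact zpow_le_zpow_right₀ one_le_two (by lia)

theorem uGrid_sub_uGrid_sub_one_le' (j : ℤ) : uGrid j - uGrid (j - 1) ≤ 2 ^ (-|j - 1|) := by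
  rw [uGrid_sub_uGrid_sub_one]
  exact zpow_le_zpow_right₀ one_le_two (by lia)

theorem two_zpow_neg_abs_le_four_mul_uGrid_sub (j : ℤ) :
    (2:ℝ) ^ (-|j|) ≤ 4 * (uGrid j - uGrid (j - 1)) := by
  rw [uGrid_sub_uGrid_sub_one, show (4:ℝ) = 2 ^ (2:ℤ) by norm_num, ← zpow_add₀ two_ne_zero]
  refine zpow_le_zpow_right₀ one_le_two ?_
  have h := abs_sub_abs_le_abs_sub (j - 1) j
  rw [sub_sub_cancel_left, abs_neg, abs_one] at h
  omega

theorem two_zpow_neg_abs_le_four_mul_uGrid_add_one_sub (j : ℤ) :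
    (2:ℝ) ^ (-|j|) ≤ 4 * (uGrid (j + 1) - uGrid j) := by
  have := uGrid_sub_uGrid_sub_one (j + 1)
  rw [add_sub_cancel_right] at this
  rw [this, show (4:ℝ) = 2 ^ (2:ℤ) by norm_num, ← zpow_add₀ two_ne_zero]
  refine zpow_le_zpow_right₀ one_le_two ?_
  have h := abs_sub_abs_le_abs_sub (j + 1) j
  rw [add_sub_cancel_left, abs_one] at h
  omega

section SetIntegralBounds

variable {α : Type*} [MeasurableSpace α] {μ : Measure α} {s : Set α} {f g : α → ℝ} {c : ℝ}

theorem ofReal_mul_setIntegral_le_setLIntegral (hs : MeasurableSet s)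
    (hf : IntegrableOn f s μ) (hf0 : ∀ x ∈ s, 0 ≤ f x) (hc : 0 ≤ c) (hcg : ∀ x ∈ s, c ≤ g x) :
    ENNReal.ofReal (c * ∫ x in s, f x ∂μ) ≤ ∫⁻ x in s, ENNReal.ofReal (g x * f x) ∂μ := by
  rw [← integral_const_mul, ofReal_integral_eq_lintegral_ofReal (hf.const_mul c)
    ((ae_restrict_iff' hs).2 (ae_of_all _ fun x hx => mul_nonneg hc (hf0 x hx)))]
  exact setLIntegral_mono' hs fun x hx =>
    ENNReal.ofReal_le_ofReal (mul_le_mul_of_nonneg_right (hcg x hx) (hf0 x hx))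

theorem setLIntegral_le_ofReal_mul_setIntegral (hs : MeasurableSet s)
    (hf : IntegrableOn f s μ) (hf0 : ∀ x ∈ s, 0 ≤ f x) (hc : 0 ≤ c) (hgc : ∀ x ∈ s, g x ≤ c) :
    ∫⁻ x in s, ENNReal.ofReal (g x * f x) ∂μ ≤ ENNReal.ofReal (c * ∫ x in s, f x ∂μ) := by
  rw [← integral_const_mul, ofReal_integral_eq_lintegral_ofReal (hf.const_mul c)
    ((ae_restrict_iff' hs).2 (ae_of_all _ fun x hx => mul_nonneg hc (hf0 x hx)))]
  exact setLIntegral_mono' hs fun x hx =>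
    ENNReal.ofReal_le_ofReal (mul_le_mul_of_nonneg_right (hgc x hx) (hf0 x hx))

end SetIntegralBounds

/-- The upper bound `hup` is what makes `g` integrable when the series converges; without it the
Bochner integral could be the junk value `0`. -/
theorem tsum_le_mul_integral_of_lintegral_bounds {α ι : Type*} [MeasurableSpace α]
    {μ : Measure α} {a : ι → ℝ} {g : α → ℝ} {c C : ℝ≥0} (ha : ∀ i, 0 ≤ a i)
    (hg : 0 ≤ᵐ[μ] g) (hgm : AEStronglyMeasurable g μ)
    (hlow : ∑' i, ENNReal.ofReal (a i) ≤ c * ∫⁻ x, ENNReal.ofReal (g x) ∂μ)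
    (hup : ∫⁻ x, ENNReal.ofReal (g x) ∂μ ≤ C * ∑' i, ENNReal.ofReal (a i)) :
    ∑' i, a i ≤ c * ∫ x, g x ∂μ := by
  by_cases hsum : Summable a
  · rw [← ENNReal.ofReal_tsum_of_nonneg ha hsum] at hlow hup
    have hfin : ∫⁻ x, ENNReal.ofReal (g x) ∂μ ≠ ⊤ :=
      ne_top_of_le_ne_top (ENNReal.mul_ne_top ENNReal.coe_ne_top ENNReal.ofReal_ne_top) hup
    have := ENNReal.toReal_mono (ENNReal.mul_ne_top ENNReal.coe_ne_top hfin) hlow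
    rwa [ENNReal.toReal_ofReal (tsum_nonneg ha), ENNReal.toReal_mul, ENNReal.coe_toReal,
      ← integral_eq_lintegral_of_nonneg_ae hg hgm] at this
  · rw [tsum_eq_zero_of_not_summable hsum]
    exact mul_nonneg c.2 (integral_nonneg_of_ae hg)

theorem AntitoneOn.aemeasurable_sq_mul {f ψ : ℝ → ℝ} (hψ : AntitoneOn ψ {x | 0 < f x})
    (hf : Measurable f) (hf0 : ∀ x, 0 ≤ f x) : AEMeasurable fun x => ψ x ^ 2 * f x := by
  have hS : MeasurableSet {x | 0 < f x} := measurableSet_lt measurable_const hf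
  have : {x | 0 < f x}.indicator (fun x => ψ x ^ 2 * f x) = fun x => ψ x ^ 2 * f x :=
    indicator_eq_self.2 fun x hx => (hf0 x).lt_of_ne' (right_ne_zero_of_mul hx)
  rw [← this, aemeasurable_indicator_iff hS]
  exact ((aemeasurable_restrict_of_antitoneOn hS hψ).pow_const 2).mul hf.aemeasurable

def quantileCell (X : ℤ → ℝ) (k : ℤ) : Set ℝ := Ioc (X (k - 1)) (X k)

noncomputable def fisherOn (f ψ : ℝ → ℝ) (s : Set ℝ) : ℝ≥0∞ :=
  ∫⁻ x in s, ENNReal.ofReal (ψ x ^ 2 * f x)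

theorem exists_mem_quantileCell {X : ℤ → ℝ} (hX : Monotone X) {x : ℝ} {m n : ℤ}
    (hm : X m < x) (hn : x ≤ X n) : ∃ k, x ∈ quantileCell X k := by
  classical
  obtain ⟨k, hk, hleast⟩ := Int.exists_least_of_bdd (P := fun k => x ≤ X k)
    ⟨m, fun k hk => le_of_not_gt fun hkm => (hk.trans (hX hkm.le)).not_gt hm⟩ ⟨n, hn⟩
  exact ⟨k, lt_of_not_ge fun h => (hleast (k - 1) h).not_gt (sub_one_lt k), hk⟩

theorem mem_iUnion_quantileCell {F : ℝ → ℝ} (hF : Monotone F) {X : ℤ → ℝ}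
    (hX : Monotone X) (hFX : ∀ k, F (X k) = uGrid k) {x : ℝ} (hx : F x ∈ Ioo 0 1) :
    x ∈ ⋃ k, quantileCell X k := by
  obtain ⟨m, hm⟩ := exists_uGrid_lt hx.1
  obtain ⟨n, hn⟩ := exists_lt_uGrid hx.2
  exact mem_iUnion.2 (exists_mem_quantileCell hX (hF.reflect_lt (hFX m ▸ hm))
    (hF.reflect_lt (hFX n ▸ hn)).le)

theorem pairwise_disjoint_quantileCell {X : ℤ → ℝ} (hX : Monotone X) :
    Pairwise (Function.onFun Disjoint (quantileCell X)) := by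
  have := hX.pairwise_disjoint_on_Ioc_pred
  simp only [Order.pred_eq_sub_one] at this
  exact this

theorem lintegral_eq_tsum_fisherOn_quantileCell {f ψ : ℝ → ℝ} {X : ℤ → ℝ}
    (hX : Monotone X) (hf0 : ∀ x, 0 ≤ f x) (hcover : {x | 0 < f x} ⊆ ⋃ k, quantileCell X k) :
    ∫⁻ x, ENNReal.ofReal (ψ x ^ 2 * f x) = ∑' k, fisherOn f ψ (quantileCell X k) := by
  have hsupp : Function.support (fun x => ENNReal.ofReal (ψ x ^ 2 * f x)) ⊆
      ⋃ k, quantileCell X k := fun x hx =>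
    hcover ((hf0 x).lt_of_ne' (right_ne_zero_of_mul (ENNReal.ofReal_ne_zero_iff.1 hx).ne'))
  rw [← setLIntegral_eq_of_support_subset hsupp]
  exact lintegral_iUnion (fun _ => measurableSet_Ioc) (pairwise_disjoint_quantileCell hX) _

theorem AntitoneOn.mem_Icc_of_mem_quantileCell {ψ : ℝ → ℝ} {S : Set ℝ} {X : ℤ → ℝ}
    (hψ : AntitoneOn ψ S) (hS : S.OrdConnected) (hXS : ∀ k, X k ∈ S) {k : ℤ} {y : ℝ}
    (hy : y ∈ quantileCell X k) : ψ y ∈ Icc (ψ (X k)) (ψ (X (k - 1))) := by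
  have hyS : y ∈ S := hS.out (hXS (k - 1)) (hXS k) (Ioc_subset_Icc_self hy)
  exact ⟨hψ hyS (hXS k) hy.2, hψ (hXS (k - 1)) hyS hy.1.le⟩

section QuantileCells

variable {f ψ : ℝ → ℝ} {X : ℤ → ℝ}

theorem ofReal_two_zpow_mul_le_four_mul_fisherOn (hf : Integrable f) (hf0 : ∀ x, 0 ≤ f x)
    (hmass : ∀ k, ∫ x in quantileCell X k, f x = uGrid k - uGrid (k - 1)) {ℓ k : ℤ} {c : ℝ}
    (hc : 0 ≤ c) (hcψ : ∀ y ∈ quantileCell X k, c ≤ ψ y ^ 2)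
    (hgap : (2:ℝ) ^ (-|ℓ|) ≤ 4 * (uGrid k - uGrid (k - 1))) :
    ENNReal.ofReal (2 ^ (-|ℓ|) * c) ≤ 4 * fisherOn f ψ (quantileCell X k) := by
  calc ENNReal.ofReal (2 ^ (-|ℓ|) * c)
      ≤ ENNReal.ofReal (4 * (c * ∫ x in quantileCell X k, f x)) :=
        ENNReal.ofReal_le_ofReal (by rw [hmass]; nlinarith)
    _ = 4 * ENNReal.ofReal (c * ∫ x in quantileCell X k, f x) := by
        rw [ENNReal.ofReal_mul (by norm_num), ENNReal.ofReal_ofNat]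
    _ ≤ 4 * fisherOn f ψ (quantileCell X k) := by
        gcongr
        exact ofReal_mul_setIntegral_le_setLIntegral measurableSet_Ioc hf.integrableOn
          (fun x _ => hf0 x) hc hcψ

theorem ofReal_dyadic_term_le (hf : Integrable f) (hf0 : ∀ x, 0 ≤ f x)
    (hmass : ∀ k, ∫ x in quantileCell X k, f x = uGrid k - uGrid (k - 1))
    (hψ : ∀ k, ∀ y ∈ quantileCell X k, ψ y ∈ Icc (ψ (X k)) (ψ (X (k - 1)))) (ℓ : ℤ) :
    ENNReal.ofReal (2 ^ (-|ℓ|) * ψ (X ℓ) ^ 2) ≤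
      4 * (fisherOn f ψ (quantileCell X ℓ) + fisherOn f ψ (quantileCell X (ℓ + 1))) := by
  rcases le_or_gt 0 (ψ (X ℓ)) with hnonneg | hneg
  · refine (ofReal_two_zpow_mul_le_four_mul_fisherOn hf hf0 hmass (sq_nonneg _)
      (fun y hy => pow_le_pow_left₀ hnonneg (hψ ℓ y hy).1 2)
      (two_zpow_neg_abs_le_four_mul_uGrid_sub ℓ)).trans ?_
    gcongr
    exact le_self_add
  · refine (ofReal_two_zpow_mul_le_four_mul_fisherOn (ψ := ψ) (k := ℓ + 1) hf hf0 hmass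
      (sq_nonneg _) (fun y hy => ?_) ?_).trans ?_
    · have := (hψ (ℓ + 1) y hy).2
      rw [add_sub_cancel_right] at this
      nlinarith
    · simpa only [add_sub_cancel_right] using two_zpow_neg_abs_le_four_mul_uGrid_add_one_sub ℓ
    · gcongr
      exact le_add_self

theorem fisherOn_quantileCell_le (hf : Integrable f) (hf0 : ∀ x, 0 ≤ f x)
    (hmass : ∀ k, ∫ x in quantileCell X k, f x = uGrid k - uGrid (k - 1))
    (hψ : ∀ k, ∀ y ∈ quantileCell X k, ψ y ∈ Icc (ψ (X k)) (ψ (X (k - 1)))) (k : ℤ) :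
    fisherOn f ψ (quantileCell X k) ≤ ENNReal.ofReal (2 ^ (-|k|) * ψ (X k) ^ 2) +
      ENNReal.ofReal (2 ^ (-|k - 1|) * ψ (X (k - 1)) ^ 2) := by
  have hsq : ∀ y ∈ quantileCell X k, ψ y ^ 2 ≤ ψ (X k) ^ 2 + ψ (X (k - 1)) ^ 2 := by
    intro y hy
    obtain ⟨hlow, hup⟩ := hψ k y hy
    rcases le_total 0 (ψ y) with h | h <;> nlinarith
  calc fisherOn f ψ (quantileCell X k)
      ≤ ENNReal.ofReal ((ψ (X k) ^ 2 + ψ (X (k - 1)) ^ 2) * ∫ x in quantileCell X k, f x) :=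
        setLIntegral_le_ofReal_mul_setIntegral measurableSet_Ioc hf.integrableOn
          (fun x _ => hf0 x) (by positivity) hsq
    _ ≤ ENNReal.ofReal (2 ^ (-|k|) * ψ (X k) ^ 2 + 2 ^ (-|k - 1|) * ψ (X (k - 1)) ^ 2) := by
        rw [hmass]
        refine ENNReal.ofReal_le_ofReal ?_
        nlinarith [uGrid_sub_uGrid_sub_one_le k, uGrid_sub_uGrid_sub_one_le' k,
          sq_nonneg (ψ (X k)), sq_nonneg (ψ (X (k - 1)))]
    _ = _ := ENNReal.ofReal_add (by positivity) (by positivity)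

theorem tsum_ofReal_dyadic_le (hf : Integrable f) (hf0 : ∀ x, 0 ≤ f x)
    (hmass : ∀ k, ∫ x in quantileCell X k, f x = uGrid k - uGrid (k - 1))
    (hψ : ∀ k, ∀ y ∈ quantileCell X k, ψ y ∈ Icc (ψ (X k)) (ψ (X (k - 1)))) :
    ∑' ℓ : ℤ, ENNReal.ofReal (2 ^ (-|ℓ|) * ψ (X ℓ) ^ 2) ≤
      8 * ∑' k, fisherOn f ψ (quantileCell X k) := by
  calc ∑' ℓ : ℤ, ENNReal.ofReal (2 ^ (-|ℓ|) * ψ (X ℓ) ^ 2)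
      ≤ ∑' ℓ, 4 * (fisherOn f ψ (quantileCell X ℓ) + fisherOn f ψ (quantileCell X (ℓ + 1))) :=
        ENNReal.tsum_le_tsum (ofReal_dyadic_term_le hf hf0 hmass hψ)
    _ = 4 * (∑' k, fisherOn f ψ (quantileCell X k) +
          ∑' k, fisherOn f ψ (quantileCell X (k + 1))) := by
        rw [ENNReal.tsum_mul_left, ENNReal.tsum_add]
    _ = 8 * ∑' k, fisherOn f ψ (quantileCell X k) := by
        have hshift : ∑' k, fisherOn f ψ (quantileCell X (k + 1)) =
            ∑' k, fisherOn f ψ (quantileCell X k) :=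
          (Equiv.addRight (1:ℤ)).tsum_eq fun k => fisherOn f ψ (quantileCell X k)
        rw [hshift]
        ring

theorem tsum_fisherOn_quantileCell_le (hf : Integrable f) (hf0 : ∀ x, 0 ≤ f x)
    (hmass : ∀ k, ∫ x in quantileCell X k, f x = uGrid k - uGrid (k - 1))
    (hψ : ∀ k, ∀ y ∈ quantileCell X k, ψ y ∈ Icc (ψ (X k)) (ψ (X (k - 1)))) :
    ∑' k, fisherOn f ψ (quantileCell X k) ≤
      2 * ∑' ℓ : ℤ, ENNReal.ofReal (2 ^ (-|ℓ|) * ψ (X ℓ) ^ 2) := by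
  calc ∑' k, fisherOn f ψ (quantileCell X k)
      ≤ ∑' k : ℤ, (ENNReal.ofReal (2 ^ (-|k|) * ψ (X k) ^ 2) +
          ENNReal.ofReal (2 ^ (-|k - 1|) * ψ (X (k - 1)) ^ 2)) :=
        ENNReal.tsum_le_tsum (fisherOn_quantileCell_le hf hf0 hmass hψ)
    _ = 2 * ∑' ℓ : ℤ, ENNReal.ofReal (2 ^ (-|ℓ|) * ψ (X ℓ) ^ 2) := by
        have hshift : ∑' k : ℤ, ENNReal.ofReal (2 ^ (-|k - 1|) * ψ (X (k - 1)) ^ 2) =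
            ∑' ℓ : ℤ, ENNReal.ofReal (2 ^ (-|ℓ|) * ψ (X ℓ) ^ 2) :=
          (Equiv.subRight (1:ℤ)).tsum_eq fun ℓ => ENNReal.ofReal (2 ^ (-|ℓ|) * ψ (X ℓ) ^ 2)
        rw [ENNReal.tsum_add, hshift]
        ring

end QuantileCells

/-- Fisher information lower bound via the dyadic quantile grid: for a continuous
log-concave density `f₀` with score `ψ₀` and `J₀' = ψ₀ ∘ F₀⁻¹`,
`i(f₀) = ∫ ψ₀² f₀ ≥ (1/8) ∑_{ℓ ∈ ℤ} 2^{−|ℓ|} J₀'(u_ℓ)²`. -/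
theorem fisher_information_dyadic_sum_bound
    (f₀ : ℝ → ℝ) (hcont : Continuous f₀)
    (hf_nonneg : ∀ x, 0 ≤ f₀ x) (hf_int : Integrable f₀ volume) (hf_mass : ∫ x, f₀ x = 1)
    (hlogconc : ∀ x y : ℝ, ∀ t ∈ Set.Icc (0:ℝ) 1,
      f₀ x ^ t * f₀ y ^ (1 - t) ≤ f₀ (t * x + (1 - t) * y))
    (Finv : ℝ → ℝ) (hFinv : ∀ u ∈ Set.Ioo (0:ℝ) 1, (∫ t in Set.Iic (Finv u), f₀ t) = u)
    (ψ₀ : ℝ → ℝ)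
    (hψ : ∀ x : ℝ, 0 < f₀ x →
      HasDerivWithinAt (fun t => Real.log (f₀ t)) (ψ₀ x) (Set.Ici x) x)
    : (1/8 : ℝ) * ∑' ℓ : ℤ, (2:ℝ) ^ (-|ℓ|) * (ψ₀ (Finv (uGrid ℓ)))^2 ≤
        ∫ x, (ψ₀ x)^2 * f₀ x := by
  have hlc : IsLogConcave f₀ := hlogconc
  set X : ℤ → ℝ := fun ℓ => Finv (uGrid ℓ)
  have hF := monotone_integral_Iic hf_int hf_nonneg
  have hFX : ∀ ℓ, ∫ t in Iic (X ℓ), f₀ t = uGrid ℓ := fun ℓ => hFinv _ (uGrid_mem_Ioo ℓ)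
  have hX : Monotone X := StrictMono.monotone fun i j hij =>
    hF.reflect_lt (by simpa only [hFX] using uGrid_strictMono hij)
  have hXpos : ∀ ℓ, 0 < f₀ (X ℓ) := fun ℓ =>
    hlc.pos_of_integral_Iic_mem_Ioo hf_int hf_mass (hFX ℓ ▸ uGrid_mem_Ioo ℓ)
  have hanti := hlc.antitoneOn_score hcont hψ
  have hcell : ∀ k, ∀ y ∈ quantileCell X k, ψ₀ y ∈ Icc (ψ₀ (X k)) (ψ₀ (X (k - 1))) :=
    fun _ _ => hanti.mem_Icc_of_mem_quantileCell hlc.convex_pos.ordConnected hXpos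
  have hmass : ∀ k, ∫ x in quantileCell X k, f₀ x = uGrid k - uGrid (k - 1) := fun k => by
    rw [quantileCell, integral_Ioc_eq_integral_Iic_sub hf_int (hX (sub_one_lt k).le), hFX, hFX]
  have hlint := lintegral_eq_tsum_fisherOn_quantileCell (ψ := ψ₀) hX hf_nonneg fun x hx =>
    mem_iUnion_quantileCell hF hX hFX
      (integral_Iic_mem_Ioo_of_pos hcont hf_nonneg hf_int hf_mass hx)
  have := tsum_le_mul_integral_of_lintegral_bounds (c := 8) (C := 2) (fun ℓ => by positivity)
    (ae_of_all _ fun x => mul_nonneg (sq_nonneg _) (hf_nonneg x))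
    (hanti.aemeasurable_sq_mul hcont.measurable hf_nonneg).aestronglyMeasurable
    (hlint ▸ tsum_ofReal_dyadic_le hf_int hf_nonneg hmass hcell)
    (hlint ▸ tsum_fisherOn_quantileCell_le hf_int hf_nonneg hmass hcell)
  push_cast at this
  linarith
end
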